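/- arXiv:2405.08781 — 2 statements merged into one kernel-verified Lean document; each statement's English description precedes it below -/
import Mathlib

section
/- For every integer j > 1, the cycle graph C_{3j} admits an efficient total coloring with 3 colors: coloring vertex v_i with i mod 3 and edge {v_i, v_{i+1}} with (i+2) mod 3 (indices mod 3j) gives a proper total coloring in which each vertex color class is an efficient dominating set of C_{3j}. -/
def IsEDS {V : Type*} (G : SimpleGraph V) (S : Set V) : Prop :=
  (∀ v ∈ S, ∀ w ∈ S, ¬ G.Adj v w) ∧ ∀ v ∉ S, ∃! w, w ∈ S ∧ G.Adj v w

def IsTC {V : Type*} (G : SimpleGraph V) (n : ℕ) (cv : V → ℕ) (ce : V → V → ℕ) : Prop :=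
  (∀ v, cv v < n) ∧ (∀ u v, G.Adj u v → ce u v < n) ∧
  (∀ u v, G.Adj u v → ce u v = ce v u) ∧
  (∀ u v, G.Adj u v → cv u ≠ cv v) ∧
  (∀ u v, G.Adj u v → ce u v ≠ cv u ∧ ce u v ≠ cv v) ∧
  (∀ u v w, G.Adj u v → G.Adj u w → v ≠ w → ce u v ≠ ce u w)

/-- The cycle graph on `ZMod n` (vertices `0, …, n-1` joined cyclically). -/
def cyc (n : ℕ) : SimpleGraph (ZMod n) where
  Adj u v := u ≠ v ∧ (v = u + 1 ∨ u = v + 1)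
  symm := by constructor; intro u v ⟨h1, h2⟩; exact ⟨h1.symm, h2.symm⟩
  loopless := by constructor; intro u h; exact h.1 rfl

theorem stmt1 (j : ℕ) (hj : 1 < j) :
    ∃ ce : ZMod (3 * j) → ZMod (3 * j) → ℕ,
      (∀ i : ZMod (3 * j), ce i (i + 1) = (i.val + 2) % 3) ∧
      IsTC (cyc (3 * j)) 3 (fun v => v.val % 3) ce ∧
      ∀ c < 3, IsEDS (cyc (3 * j)) {v | v.val % 3 = c} := by
  haveI : NeZero (3 * j) := ⟨by omega⟩
  haveI : Fact (1 < 3 * j) := ⟨by omega⟩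
  have key : ∀ v : ZMod (3 * j), (v + 1).val % 3 = (v.val + 1) % 3 := by
    intro v
    rw [ZMod.val_add, ZMod.val_one, Nat.mod_mod_of_dvd _ ⟨j, rfl⟩]
  have key' : ∀ v : ZMod (3 * j), (v - 1).val % 3 = (v.val + 2) % 3 := by
    intro v
    have h := key (v - 1)
    rw [sub_add_cancel] at h
    have hlt : (v - 1).val % 3 < 3 := Nat.mod_lt _ (by norm_num)
    have hlt2 : v.val % 3 < 3 := Nat.mod_lt _ (by norm_num)
    omega
  have two_ne : ∀ v : ZMod (3 * j), v + 1 + 1 ≠ v := by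
    intro v h
    have h1 := key v
    have h2 := key (v + 1)
    rw [h] at h2
    omega
  have succ_ne : ∀ v : ZMod (3 * j), v + 1 ≠ v := by
    intro v h
    have h1 := key v
    rw [h] at h1
    omega
  have pred_ne : ∀ v : ZMod (3 * j), v - 1 ≠ v := by
    intro v h
    have h1 := key' v
    rw [h] at h1
    omega
  refine ⟨fun u v => if v = u + 1 then (u.val + 2) % 3 else (v.val + 2) % 3, ?_, ?_, ?_⟩
  · intro i; simp
  · refine ⟨?_, ?_, ?_, ?_, ?_, ?_⟩
    · intro v; exact Nat.mod_lt _ (by norm_num)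
    · intro u v _; dsimp only; split <;> omega
    · intro u v ⟨hne, hc⟩
      dsimp only
      rcases hc with h1 | h1
      · have hnot : u ≠ v + 1 := by
          intro h2; rw [h1] at h2; exact two_ne u h2.symm
        rw [if_pos h1, if_neg hnot]
      · have hnot : v ≠ u + 1 := by
          intro h2; rw [h1] at h2; exact two_ne v h2.symm
        rw [if_neg hnot, if_pos h1]
    · intro u v ⟨hne, hc⟩
      dsimp only
      rcases hc with h1 | h1
      · subst h1; have := key u; omega
      · subst h1; have := key v; omega
    · intro u v ⟨hne, hc⟩
      dsimp only
      rcases hc with h1 | h1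
      · rw [if_pos h1]
        subst h1
        have := key u
        constructor <;> omega
      · have hnot : v ≠ u + 1 := by
          intro h2; rw [h1] at h2; exact two_ne v h2.symm
        rw [if_neg hnot]
        subst h1
        have := key v
        constructor <;> omega
    · intro u v w ⟨hne1, hc1⟩ ⟨hne2, hc2⟩ hvw
      dsimp only
      rcases hc1 with h1 | h1 <;> rcases hc2 with h2 | h2
      · exact absurd (h1.trans h2.symm) hvw
      · rw [if_pos h1]
        have hnot : w ≠ u + 1 := by rw [← h1]; exact fun h => hvw h.symm
        rw [if_neg hnot]
        have hk := key w
        rw [← h2] at hk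
        omega
      · rw [if_pos h2]
        have hnot : v ≠ u + 1 := by rw [← h2]; exact hvw
        rw [if_neg hnot]
        have hk := key v
        rw [← h1] at hk
        omega
      · exact absurd (by rw [h1] at h2; exact add_right_cancel h2) hvw
  · intro c hc
    constructor
    · intro v hv w hw ⟨hne, hcase⟩
      simp only [Set.mem_setOf_eq] at hv hw
      rcases hcase with h1 | h1
      · subst h1; have := key v; omega
      · subst h1; have := key w; omega
    · intro v hv
      simp only [Set.mem_setOf_eq] at hv
      have h1 := key v
      have h2 := key' v
      have hlt : v.val % 3 < 3 := Nat.mod_lt _ (by norm_num)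
      by_cases hcv : (v.val + 1) % 3 = c
      · refine ⟨v + 1, ⟨by simp only [Set.mem_setOf_eq]; omega,
          ⟨(succ_ne v).symm, Or.inl rfl⟩⟩, ?_⟩
        rintro y ⟨hy1, hyne, hyc⟩
        simp only [Set.mem_setOf_eq] at hy1
        rcases hyc with h | h
        · exact h
        · have hy : y = v - 1 := eq_sub_of_add_eq h.symm
          rw [hy] at hy1
          omega
      · have hcv2 : (v.val + 2) % 3 = c := by omega
        refine ⟨v - 1, ⟨by simp only [Set.mem_setOf_eq]; omega,
          ⟨(pred_ne v).symm, Or.inr (sub_add_cancel v 1).symm⟩⟩, ?_⟩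
        rintro y ⟨hy1, hyne, hyc⟩
        simp only [Set.mem_setOf_eq] at hy1
        rcases hyc with h | h
        · rw [h] at hy1; omega
        · exact eq_sub_of_add_eq h.symm
end

section
/- The 3-cube Q_3 admits an efficient total coloring with 4 colors: there is a proper total coloring c of Q_3 with colors {0,1,2,3} such that each vertex color class is an efficient dominating set (in fact each class is a pair of antipodal vertices). -/
/-- The 3-dimensional hypercube graph on binary strings of length 3. -/
def Q3 : SimpleGraph (Fin 3 → Fin 2) where
  Adj x y := (Finset.univ.filter fun i => x i ≠ y i).card = 1
  symm := by
    constructor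
    intro x y h
    have : (Finset.univ.filter fun i => y i ≠ x i)
        = (Finset.univ.filter fun i => x i ≠ y i) :=
      Finset.filter_congr (fun i _ => ne_comm)
    rw [this]; exact h
  loopless := by constructor; intro x h; simp at h


def cvF (v : Fin 3 → Fin 2) : ℕ :=
  2 * (((v 0).val + (v 1).val) % 2) + (((v 0).val + (v 2).val) % 2)

def ceT : List ℕ :=
  [0, 1, 3, 0, 2, 0, 0, 0, 1, 0, 0, 2, 0, 0, 0, 0, 3, 0, 0, 0, 0, 0, 1, 0, 0, 2, 0, 0, 0, 0, 0, 3, 2, 0, 0, 0, 0, 3, 0, 0, 0, 0, 0, 0, 3, 0, 0, 1, 0, 0, 1, 0, 0, 0, 0, 2, 0, 0, 0, 3, 0, 1, 2, 0]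

instance : DecidableRel Q3.Adj := fun x y =>
  inferInstanceAs (Decidable ((Finset.univ.filter fun i => x i ≠ y i).card = 1))

def ceF (u v : Fin 3 → Fin 2) : ℕ :=
  ceT.getD (((u 0).val + 2 * (u 1).val + 4 * (u 2).val) * 8 +
    ((v 0).val + 2 * (v 1).val + 4 * (v 2).val)) 0

theorem stmt3 :
    ∃ (cv : (Fin 3 → Fin 2) → ℕ) (ce : (Fin 3 → Fin 2) → (Fin 3 → Fin 2) → ℕ),
      IsTC Q3 4 cv ce ∧ (∀ c < 4, IsEDS Q3 {v | cv v = c}) ∧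
      (∀ v : Fin 3 → Fin 2, cv v = cv (fun i => v i + 1)) := by
  refine ⟨cvF, ceF, ?_, ?_, ?_⟩
  · refine ⟨?_, ?_, ?_, ?_, ?_, ?_⟩ <;> decide
  · intro c hc
    constructor
    · intro v hv w hw
      simp only [Set.mem_setOf_eq] at hv hw
      revert hv hw
      revert v w
      interval_cases c <;> decide
    · intro v hv
      simp only [Set.mem_setOf_eq] at hv ⊢
      revert hv
      revert v
      simp only [ExistsUnique]
      interval_cases c <;> decide
  · decide
end
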